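/- Let D ≡ 1 (mod 4) be a positive integer, r an odd integer and N a positive integer with D = r² + 4N, and ν = (r + √D)/(2√D) ∈ ℚ(√D). Then for every ξ = x₁ + ((1+√D)/2)·x₂ with x₁, x₂ ∈ ℚ, one has Tr(ν·ξ²) = y₁² + N·y₂², where y₁ = x₁ + ((r+1)/2)x₂ and y₂ = −x₂, and Tr denotes the trace of ℚ(√D)/ℚ. -/

import Mathlib

/- The trace is `(ξ² + ξ'²)/2 + r (ξ² − ξ'²)/(2s)`, and `ξ² − ξ'² = s x₂ (2x₁ + x₂)`, so `s`
cancels. -/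
theorem trace_mul_sq_eq_sq_add_mul_sq {K : Type*} [Field K] [NeZero (2 : K)]
    (s r N x₁ x₂ : K) (hs : s ^ 2 = r ^ 2 + 4 * N) (hs0 : s ≠ 0) :
    (r + s) / (2 * s) * (x₁ + (1 + s) / 2 * x₂) ^ 2 +
        (s - r) / (2 * s) * (x₁ + (1 - s) / 2 * x₂) ^ 2 =
      (x₁ + (r + 1) / 2 * x₂) ^ 2 + N * (-x₂) ^ 2 := by
  field_simp
  linear_combination (2 * s * x₂ ^ 2) * hs

theorem stmt_18 (D r N : ℤ) (hD : 0 < D) (hDrN : D = r ^ 2 + 4 * N) :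
    ∀ x₁ x₂ : ℚ,
      (((r : ℝ) + Real.sqrt (D : ℝ)) / (2 * Real.sqrt (D : ℝ))) *
          ((x₁ : ℝ) + ((1 + Real.sqrt (D : ℝ)) / 2) * (x₂ : ℝ)) ^ 2 +
        ((Real.sqrt (D : ℝ) - (r : ℝ)) / (2 * Real.sqrt (D : ℝ))) *
          ((x₁ : ℝ) + ((1 - Real.sqrt (D : ℝ)) / 2) * (x₂ : ℝ)) ^ 2 =
      ((x₁ : ℝ) + (((r : ℝ) + 1) / 2) * (x₂ : ℝ)) ^ 2 + (N : ℝ) * (-(x₂ : ℝ)) ^ 2 := by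
  intro x₁ x₂
  have hDpos : (0 : ℝ) < D := by exact_mod_cast hD
  have hs : Real.sqrt D ^ 2 = (r : ℝ) ^ 2 + 4 * N := by
    rw [Real.sq_sqrt hDpos.le]
    exact_mod_cast hDrN
  exact trace_mul_sq_eq_sq_add_mul_sq _ _ _ _ _ hs (Real.sqrt_ne_zero'.mpr hDpos)
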